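/- For every positive integer l, the following identity holds in ℂ: Σ_{n₀+n₁+n₂+n₃=4l, n₀,n₁,n₂,n₃ ≥ 0} i^{n₁+2n₂+3n₃} / ((2n₀+1)!(2n₁+1)!(2n₂+1)!(2n₃+1)!) = Σ_{m=0}^{2l} (−1)^m · 2^{4l+2} / ((4m+2)!(8l−4m+2)!), where i = √−1 is the imaginary unit. -/

import Mathlib

open Finset Complex

namespace Aux17

noncomputable def F (k : ℕ) : ℂ :=
  ∑ p ∈ Finset.HasAntidiagonal.antidiagonal k, (-1 : ℂ) ^ p.2 /
    ((Nat.factorial (2 * p.1 + 1) : ℂ) * (Nat.factorial (2 * p.2 + 1) : ℂ))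

lemma binom (a b : ℂ) (N : ℕ) :
    ∑ p ∈ Finset.HasAntidiagonal.antidiagonal N,
        a ^ p.1 * b ^ p.2 / ((Nat.factorial p.1 : ℂ) * (Nat.factorial p.2 : ℂ))
      = (a + b) ^ N / (Nat.factorial N : ℂ) := by
  rw [Finset.Nat.sum_antidiagonal_eq_sum_range_succ_mk, add_pow, Finset.sum_div]
  refine Finset.sum_congr rfl fun j hj => ?_
  have hjN : j ≤ N := Nat.lt_succ_iff.mp (Finset.mem_range.mp hj)
  have hfac : ((N.choose j : ℕ) : ℂ) * (Nat.factorial j : ℂ) * (Nat.factorial (N - j) : ℂ)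
      = (Nat.factorial N : ℂ) := by
    exact_mod_cast congrArg (Nat.cast : ℕ → ℂ) (Nat.choose_mul_factorial_mul_factorial hjN)
  have h1 : (Nat.factorial j : ℂ) ≠ 0 := Nat.cast_ne_zero.mpr (Nat.factorial_ne_zero j)
  have h2 : (Nat.factorial (N - j) : ℂ) ≠ 0 := Nat.cast_ne_zero.mpr (Nat.factorial_ne_zero _)
  have h3 : (Nat.factorial N : ℂ) ≠ 0 := Nat.cast_ne_zero.mpr (Nat.factorial_ne_zero N)
  field_simp
  rw [← hfac]; ring

lemma F_eq (k : ℕ) :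
    F k = ((1 + I) ^ (2 * k + 2) - (-1 + I) ^ (2 * k + 2)) /
      (2 * I * (Nat.factorial (2 * k + 2) : ℂ)) := by
  have hS : ∑ p ∈ Finset.HasAntidiagonal.antidiagonal (2 * k + 2),
      (1 - (-1 : ℂ) ^ p.1) * I ^ p.2 / ((Nat.factorial p.1 : ℂ) * (Nat.factorial p.2 : ℂ))
      = ((1 + I) ^ (2 * k + 2) - (-1 + I) ^ (2 * k + 2)) / (Nat.factorial (2 * k + 2) : ℂ) := by
    have h1 := binom 1 I (2 * k + 2)
    have h2 := binom (-1) I (2 * k + 2)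
    rw [sub_div, ← h1, ← h2, ← Finset.sum_sub_distrib]
    refine Finset.sum_congr rfl fun p _ => ?_
    ring
  have him : (Finset.HasAntidiagonal.antidiagonal k).image (fun q : ℕ × ℕ => (2 * q.1 + 1, 2 * q.2 + 1))
      ⊆ Finset.HasAntidiagonal.antidiagonal (2 * k + 2) := by
    intro p hp
    simp only [Finset.mem_image, Finset.HasAntidiagonal.mem_antidiagonal] at hp ⊢
    obtain ⟨q, hq, rfl⟩ := hp
    omega
  have hzero : ∀ p ∈ Finset.HasAntidiagonal.antidiagonal (2 * k + 2),
      p ∉ (Finset.HasAntidiagonal.antidiagonal k).image (fun q : ℕ × ℕ => (2 * q.1 + 1, 2 * q.2 + 1)) →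
      (1 - (-1 : ℂ) ^ p.1) * I ^ p.2 / ((Nat.factorial p.1 : ℂ) * (Nat.factorial p.2 : ℂ)) = 0 := by
    intro p hp hnp
    obtain ⟨p1, p2⟩ := p
    rcases Nat.even_or_odd p1 with he | ho
    · rw [he.neg_one_pow]; simp
    · exfalso
      apply hnp
      obtain ⟨n, hn⟩ := ho
      simp only [Finset.HasAntidiagonal.mem_antidiagonal] at hp
      refine Finset.mem_image.mpr ⟨(n, k - n), Finset.HasAntidiagonal.mem_antidiagonal.mpr (by omega), ?_⟩
      simp only [Prod.mk.injEq]
      omega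
  have hsum : ∑ p ∈ Finset.HasAntidiagonal.antidiagonal (2 * k + 2),
      (1 - (-1 : ℂ) ^ p.1) * I ^ p.2 / ((Nat.factorial p.1 : ℂ) * (Nat.factorial p.2 : ℂ))
      = 2 * I * F k := by
    rw [← Finset.sum_subset him hzero, Finset.sum_image (by
      intro x hx y hy hxy
      simp only [Prod.ext_iff] at hxy ⊢
      omega)]
    rw [F, Finset.mul_sum]
    refine Finset.sum_congr rfl fun q _ => ?_
    have ho : (-1 : ℂ) ^ (2 * q.1 + 1) = -1 := by
      rw [pow_succ, pow_mul, neg_one_sq, one_pow, one_mul]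
    have hI : I ^ (2 * q.2 + 1) = (-1 : ℂ) ^ q.2 * I := by
      rw [pow_succ, pow_mul, I_sq]
    rw [ho, hI]; ring
  rw [hsum] at hS
  have hI0 : (2 : ℂ) * I ≠ 0 := by
    simp [Complex.I_ne_zero]
  have hfac : (Nat.factorial (2 * k + 2) : ℂ) ≠ 0 := Nat.cast_ne_zero.mpr (Nat.factorial_ne_zero _)
  rw [eq_div_iff hfac] at hS
  rw [eq_div_iff (mul_ne_zero hI0 hfac)]
  linear_combination hS

lemma one_add_I_sq : (1 + I) ^ 2 = 2 * I := by
  rw [show (1 + I) ^ 2 = 1 + 2 * I + I ^ 2 by ring, I_sq]; ring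

lemma neg_one_add_I_sq : (-1 + I) ^ 2 = -(2 * I) := by
  rw [show (-1 + I) ^ 2 = 1 - 2 * I + I ^ 2 by ring, I_sq]; ring

lemma F_odd (r : ℕ) : F (2 * r + 1) = 0 := by
  rw [F_eq]
  have h1 : (1 + I) ^ (2 * (2 * r + 1) + 2) = (2 * I) ^ (2 * r + 2) := by
    rw [show 2 * (2 * r + 1) + 2 = 2 * (2 * r + 2) by ring, pow_mul, one_add_I_sq]
  have h2 : (-1 + I) ^ (2 * (2 * r + 1) + 2) = (2 * I) ^ (2 * r + 2) := by
    rw [show 2 * (2 * r + 1) + 2 = 2 * (2 * r + 2) by ring, pow_mul, neg_one_add_I_sq,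
      neg_pow, show 2 * r + 2 = 2 * (r + 1) by ring, pow_mul, neg_one_sq, one_pow, one_mul]
  rw [h1, h2, sub_self, zero_div]

lemma F_even (r : ℕ) :
    F (2 * r) = (-1 : ℂ) ^ r * 2 ^ (2 * r + 1) / ((Nat.factorial (4 * r + 2) : ℂ)) := by
  rw [F_eq]
  have h1 : (1 + I) ^ (2 * (2 * r) + 2) = (2 * I) ^ (2 * r + 1) := by
    rw [show 2 * (2 * r) + 2 = 2 * (2 * r + 1) by ring, pow_mul, one_add_I_sq]
  have h2 : (-1 + I) ^ (2 * (2 * r) + 2) = -((2 * I) ^ (2 * r + 1)) := by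
    rw [show 2 * (2 * r) + 2 = 2 * (2 * r + 1) by ring, pow_mul, neg_one_add_I_sq,
      neg_pow, pow_succ, pow_mul, neg_one_sq, one_pow, one_mul, neg_one_mul]
  rw [h1, h2, show 2 * (2 * r) + 2 = 4 * r + 2 by ring]
  have hfac : (Nat.factorial (4 * r + 2) : ℂ) ≠ 0 := Nat.cast_ne_zero.mpr (Nat.factorial_ne_zero _)
  have hI0 : I ≠ 0 := Complex.I_ne_zero
  have hpow : (2 * I) ^ (2 * r + 1) = (-1 : ℂ) ^ r * 2 ^ (2 * r + 1) * I := by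
    rw [pow_succ, pow_mul, show (2 * I) ^ 2 = (-4 : ℂ) by
      rw [mul_pow, I_sq]; ring]
    rw [show (-4 : ℂ) = -1 * 2 ^ 2 by ring, mul_pow, ← pow_mul]
    ring
  rw [hpow]
  field_simp
  ring

lemma split (n : ℕ) (f : (Fin 4 → ℕ) → ℂ) :
    ∑ c ∈ Finset.Nat.antidiagonalTuple 4 n, f c
      = ∑ p ∈ Finset.HasAntidiagonal.antidiagonal n, ∑ a ∈ Finset.HasAntidiagonal.antidiagonal p.1,
          ∑ b ∈ Finset.HasAntidiagonal.antidiagonal p.2, f ![a.1, b.1, a.2, b.2] := by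
  have : ∑ p ∈ Finset.HasAntidiagonal.antidiagonal n, ∑ a ∈ Finset.HasAntidiagonal.antidiagonal p.1,
          ∑ b ∈ Finset.HasAntidiagonal.antidiagonal p.2, f ![a.1, b.1, a.2, b.2]
      = ∑ x ∈ (Finset.HasAntidiagonal.antidiagonal n).sigma
          (fun p => Finset.HasAntidiagonal.antidiagonal p.1 ×ˢ Finset.HasAntidiagonal.antidiagonal p.2),
          f ![x.2.1.1, x.2.2.1, x.2.1.2, x.2.2.2] := by
    rw [Finset.sum_sigma]
    refine Finset.sum_congr rfl fun p _ => ?_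
    rw [Finset.sum_product]
  rw [this]
  refine Finset.sum_nbij'
    (fun c => ⟨(c 0 + c 2, c 1 + c 3), ((c 0, c 2), (c 1, c 3))⟩)
    (fun x => ![x.2.1.1, x.2.2.1, x.2.1.2, x.2.2.2]) ?_ ?_ ?_ ?_ ?_
  · intro c hc
    rw [Finset.Nat.mem_antidiagonalTuple, Fin.sum_univ_four] at hc
    simp only [Finset.mem_sigma, Finset.HasAntidiagonal.mem_antidiagonal, Finset.mem_product]
    exact ⟨by omega, trivial, trivial⟩
  · intro x hx
    simp only [Finset.mem_sigma, Finset.HasAntidiagonal.mem_antidiagonal, Finset.mem_product] at hx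
    rw [Finset.Nat.mem_antidiagonalTuple, Fin.sum_univ_four]
    simp only [Matrix.cons_val_zero, Matrix.cons_val_one, Matrix.head_cons,
      Matrix.cons_val_two, Matrix.tail_cons, Matrix.cons_val_three]
    omega
  · intro c _
    funext i
    fin_cases i <;> simp
  · intro x hx
    simp only [Finset.mem_sigma, Finset.HasAntidiagonal.mem_antidiagonal, Finset.mem_product] at hx
    obtain ⟨⟨j, k⟩, ⟨a1, a2⟩, ⟨b1, b2⟩⟩ := x
    obtain ⟨h1, h2, h3⟩ := hx
    simp only at h2 h3 ⊢
    simp only [Matrix.cons_val_zero, Matrix.cons_val_one, Matrix.head_cons,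
      Matrix.cons_val_two, Matrix.tail_cons, Matrix.cons_val_three]
    subst h2 h3
    rfl
  · intro c _
    refine congrArg f ?_
    funext i
    fin_cases i <;> simp

end Aux17

open Finset Aux17

/-- for every positive integer l,
`Σ_{n₀+n₁+n₂+n₃=4l} i^{n₁+2n₂+3n₃} / ((2n₀+1)!(2n₁+1)!(2n₂+1)!(2n₃+1)!)
  = Σ_{m=0}^{2l} (-1)^m 2^{4l+2} / ((4m+2)!(8l-4m+2)!)` in ℂ. -/
theorem complex_identity (l : ℕ) (hl : 1 ≤ l) :
    ∑ c ∈ Finset.Nat.antidiagonalTuple 4 (4 * l),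
        Complex.I ^ (c 1 + 2 * c 2 + 3 * c 3) /
          ((Nat.factorial (2 * c 0 + 1) : ℂ) * (Nat.factorial (2 * c 1 + 1) : ℂ) *
            (Nat.factorial (2 * c 2 + 1) : ℂ) * (Nat.factorial (2 * c 3 + 1) : ℂ)) =
      ∑ m ∈ Finset.range (2 * l + 1),
        (-1 : ℂ) ^ m * 2 ^ (4 * l + 2) /
          ((Nat.factorial (4 * m + 2) : ℂ) *
            (Nat.factorial (8 * l - 4 * m + 2) : ℂ)) := by
  rw [Aux17.split]
  have hmid : ∀ p ∈ Finset.HasAntidiagonal.antidiagonal (4 * l),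
      (∑ a ∈ Finset.HasAntidiagonal.antidiagonal p.1, ∑ b ∈ Finset.HasAntidiagonal.antidiagonal p.2,
        Complex.I ^ ((![a.1, b.1, a.2, b.2] : Fin 4 → ℕ) 1
            + 2 * (![a.1, b.1, a.2, b.2] : Fin 4 → ℕ) 2
            + 3 * (![a.1, b.1, a.2, b.2] : Fin 4 → ℕ) 3) /
          ((Nat.factorial (2 * (![a.1, b.1, a.2, b.2] : Fin 4 → ℕ) 0 + 1) : ℂ)
            * (Nat.factorial (2 * (![a.1, b.1, a.2, b.2] : Fin 4 → ℕ) 1 + 1) : ℂ)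
            * (Nat.factorial (2 * (![a.1, b.1, a.2, b.2] : Fin 4 → ℕ) 2 + 1) : ℂ)
            * (Nat.factorial (2 * (![a.1, b.1, a.2, b.2] : Fin 4 → ℕ) 3 + 1) : ℂ)))
      = F p.1 * (Complex.I ^ p.2 * F p.2) := by
    intro p _
    simp only [Matrix.cons_val_zero, Matrix.cons_val_one, Matrix.head_cons,
      Matrix.cons_val_two, Matrix.tail_cons, Matrix.cons_val_three]
    rw [F, F, Finset.mul_sum, Finset.sum_mul_sum]
    refine Finset.sum_congr rfl fun a _ => Finset.sum_congr rfl fun b hb => ?_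
    have hb2 : b.1 + b.2 = p.2 := Finset.HasAntidiagonal.mem_antidiagonal.mp hb
    have hIpow : Complex.I ^ (b.1 + 2 * a.2 + 3 * b.2)
        = (-1 : ℂ) ^ a.2 * (Complex.I ^ p.2 * (-1 : ℂ) ^ b.2) := by
      rw [show b.1 + 2 * a.2 + 3 * b.2 = (b.1 + b.2) + 2 * a.2 + 2 * b.2 by ring,
        pow_add, pow_add, pow_mul, pow_mul, Complex.I_sq, hb2]
      ring
    rw [hIpow]
    ring
  rw [Finset.sum_congr rfl hmid]
  have him : (Finset.range (2 * l + 1)).image (fun m => (2 * m, 4 * l - 2 * m))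
      ⊆ Finset.HasAntidiagonal.antidiagonal (4 * l) := by
    intro p hp
    simp only [Finset.mem_image, Finset.mem_range] at hp
    obtain ⟨m, hm, rfl⟩ := hp
    rw [Finset.HasAntidiagonal.mem_antidiagonal]
    omega
  have hzero : ∀ p ∈ Finset.HasAntidiagonal.antidiagonal (4 * l),
      p ∉ (Finset.range (2 * l + 1)).image (fun m => (2 * m, 4 * l - 2 * m)) →
      F p.1 * (Complex.I ^ p.2 * F p.2) = 0 := by
    intro p hp hnp
    obtain ⟨p1, p2⟩ := p
    rw [Finset.HasAntidiagonal.mem_antidiagonal] at hp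
    rcases Nat.even_or_odd p1 with ⟨m, hm⟩ | ⟨m, hm⟩
    · exfalso
      apply hnp
      refine Finset.mem_image.mpr ⟨m, Finset.mem_range.mpr (by omega), ?_⟩
      simp only [Prod.mk.injEq]
      omega
    · have hp1 : p1 = 2 * m + 1 := by omega
      simp only [hp1, F_odd, zero_mul]
  rw [← Finset.sum_subset him hzero, Finset.sum_image (by
    intro x hx y hy hxy
    simp only [Prod.ext_iff] at hxy
    omega)]
  refine Finset.sum_congr rfl fun m hm => ?_
  have hm' : m ≤ 2 * l := Nat.lt_succ_iff.mp (Finset.mem_range.mp hm)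
  set k := 2 * l - m with hk
  have h1 : 4 * l - 2 * m = 2 * k := by omega
  have h2 : 8 * l - 4 * m + 2 = 4 * k + 2 := by omega
  simp only [h1, h2]
  rw [F_even, F_even, pow_mul, Complex.I_sq]
  have hneg : ((-1 : ℂ)) ^ k * ((-1 : ℂ)) ^ k = 1 := by
    rw [← pow_add, show k + k = 2 * k by ring, pow_mul, neg_one_sq, one_pow]
  have hpow2 : (2 : ℂ) ^ (4 * l + 2) = 2 ^ (2 * m + 1) * 2 ^ (2 * k + 1) := by
    rw [← pow_add]
    congr 1
    omega
  rw [hpow2]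
  linear_combination ((-1 : ℂ)) ^ m * 2 ^ (2 * m + 1) * 2 ^ (2 * k + 1) /
    ((Nat.factorial (4 * m + 2) : ℂ) * (Nat.factorial (4 * k + 2) : ℂ)) * hneg
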